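/- The function D(x) = −((1+16x)/4)·₃F₂(1, 1, 1; 3/2, 3/2; 1+16x) satisfies L·D = 1 + 16x on the interval where |1+16x| < 1 (i.e., −1/8 < x < 0), where L = x(1+16x)²·d²/dx² + (1+16x)²·d/dx − 4. -/

import Mathlib

/-!
With `w = 1 + 16x` and `F = ₃F₂(1,1,1; 3/2,3/2; ·)`, the equation `L·D = 1 + 16x` is `w` times
`(1 - 4w) F + 4w(2 - 3w) F' + 4w²(1 - w) F'' = 1`, i.e. `(2θ + 1)² F - 4w (θ + 1)² F = 1` for the
Euler operator `θ = w d/dw`. On coefficients this says `c₀ = 1` and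
`c_{k+1} (2k + 3)² = 4 (k + 1)² c_k`, which is the ratio of consecutive terms of `₃F₂`. The same
recurrence makes `|c_k|` nonincreasing, so the series may be differentiated termwise on `|w| < 1`.
-/

open Finset

/-- Pochhammer symbol `(a)_k = a(a+1)⋯(a+k-1)`. -/
noncomputable def poch (a : ℝ) (k : ℕ) : ℝ := ∏ i ∈ Finset.range k, (a + i)

/-- `₃F₂(1,1,1; 3/2,3/2; w) = ∑_k (k!)²/((3/2)_k)² wᵏ`. -/
noncomputable def hyp3F2 (w : ℝ) : ℝ :=
  ∑' k : ℕ, ((k.factorial : ℝ)) ^ 2 / (poch (3 / 2) k) ^ 2 * w ^ k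

/-- `D(x) = −((1+16x)/4) ₃F₂(1,1,1; 3/2,3/2; 1+16x)`. -/
noncomputable def Dcatalan (x : ℝ) : ℝ :=
  -((1 + 16 * x) / 4) * hyp3F2 (1 + 16 * x)

noncomputable def powSeries (a : ℕ → ℝ) (w : ℝ) : ℝ := ∑' k, a k * w ^ k

def derivCoeff (a : ℕ → ℝ) (k : ℕ) : ℝ := (k + 1) * a (k + 1)

-- The radius of convergence of `∑ aₖ wᵏ` is at least `1`.
def ConvergesOnUnitBall (a : ℕ → ℝ) : Prop :=
  ∀ r : ℝ, 0 ≤ r → r < 1 → Summable fun k => |a k| * r ^ k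

namespace ConvergesOnUnitBall

variable {a : ℕ → ℝ}

theorem summable (ha : ConvergesOnUnitBall a) {w : ℝ} (hw : |w| < 1) :
    Summable fun k => a k * w ^ k :=
  .of_norm_bounded (ha |w| (abs_nonneg w) hw) fun k => by
    rw [Real.norm_eq_abs, abs_mul, abs_pow]

theorem hasSum (ha : ConvergesOnUnitBall a) {w : ℝ} (hw : |w| < 1) :
    HasSum (fun k => a k * w ^ k) (powSeries a w) :=
  (ha.summable hw).hasSum

theorem of_bounded {C : ℝ} (h : ∀ k, |a k| ≤ C) : ConvergesOnUnitBall a := fun r hr0 hr1 =>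
  .of_nonneg_of_le (fun k => by positivity)
    (fun k => mul_le_mul_of_nonneg_right (h k) (by positivity))
    ((summable_geometric_of_lt_one hr0 hr1).mul_left C)

theorem derivCoeff (ha : ConvergesOnUnitBall a) : ConvergesOnUnitBall (derivCoeff a) := by
  intro r hr0 hr1
  obtain ⟨s, hrs, hs1⟩ : ∃ s, r < s ∧ s < 1 := ⟨(1 + r) / 2, by linarith, by linarith⟩
  have hs0 : 0 < s := hr0.trans_lt hrs
  have hsum := ha s hs0.le hs1
  set B := ∑' j, |a j| * s ^ j
  have hB : ∀ k, |a k| ≤ B / s ^ k := fun k =>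
    (le_div_iff₀ (by positivity)).2 (hsum.le_tsum k fun j _ => by positivity)
  have hgeom : Summable fun k : ℕ => ((k + 1 : ℕ) : ℝ) * (r / s) ^ k := by
    refine (summable_descFactorial_mul_geometric_of_norm_lt_one 1 (r := r / s) ?_).congr
      fun k => by simp
    rw [Real.norm_eq_abs, abs_of_nonneg (by positivity)]
    exact (div_lt_one hs0).2 hrs
  refine .of_nonneg_of_le (fun k => by positivity) (fun k => ?_) (hgeom.mul_left (B / s))
  calc |_root_.derivCoeff a k| * r ^ k = ((k + 1) * r ^ k) * |a (k + 1)| := by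
        rw [_root_.derivCoeff, abs_mul, abs_of_nonneg (by positivity : (0 : ℝ) ≤ k + 1)]; ring
    _ ≤ ((k + 1) * r ^ k) * (B / s ^ (k + 1)) := by gcongr; exact hB (k + 1)
    _ = B / s * (((k + 1 : ℕ) : ℝ) * (r / s) ^ k) := by
        rw [div_pow]; push_cast; field_simp; ring

end ConvergesOnUnitBall

theorem hasSum_pow_of_hasSum_succ {b : ℕ → ℝ} {w S : ℝ}
    (h : HasSum (fun k => b (k + 1) * w ^ k) S) :
    HasSum (fun k => b k * w ^ k) (b 0 + w * S) := by
  simpa using HasSum.zero_add (f := fun k => b k * w ^ k)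
    ((h.mul_left w).congr_fun fun k => by ring)

theorem hasDerivAt_powSeries {a : ℕ → ℝ} (ha : ConvergesOnUnitBall a) {w : ℝ} (hw : |w| < 1) :
    HasDerivAt (powSeries a) (powSeries (derivCoeff a) w) w := by
  obtain ⟨s, hws, hs1⟩ : ∃ s, |w| < s ∧ s < 1 := ⟨(|w| + 1) / 2, by linarith, by linarith⟩
  have hmem : w ∈ Set.Ioo (-s) s := abs_lt.1 hws
  -- differentiating the tail `∑ aₖ₊₁ yᵏ⁺¹` gives the derivative series already indexed by `k`
  have hterm : ∀ (k : ℕ) (y : ℝ), y ∈ Set.Ioo (-s) s →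
      HasDerivAt (fun y => a (k + 1) * y ^ (k + 1)) (derivCoeff a k * y ^ k) y := by
    intro k y _
    refine ((hasDerivAt_pow (k + 1) y).const_mul (a (k + 1))).congr_deriv ?_
    rw [derivCoeff, Nat.add_sub_cancel]; push_cast; ring
  have hbound : ∀ (k : ℕ) (y : ℝ), y ∈ Set.Ioo (-s) s →
      ‖derivCoeff a k * y ^ k‖ ≤ |derivCoeff a k| * s ^ k := by
    intro k y hy
    rw [Real.norm_eq_abs, abs_mul, abs_pow]
    gcongr
    exact (abs_lt.2 hy).le
  have hsw : Summable fun k => a (k + 1) * w ^ (k + 1) :=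
    (summable_nat_add_iff (f := fun k => a k * w ^ k) 1).2 (ha.summable hw)
  have htail : HasDerivAt (fun y => ∑' k, a (k + 1) * y ^ (k + 1))
      (powSeries (derivCoeff a) w) w :=
    hasDerivAt_tsum_of_isPreconnected (ha.derivCoeff s ((abs_nonneg w).trans hws.le) hs1)
      isOpen_Ioo isPreconnected_Ioo hterm hbound hmem hsw hmem
  refine (htail.const_add (a 0)).congr_of_eventuallyEq ?_
  filter_upwards [isOpen_Ioo.mem_nhds (abs_lt.1 hw)] with y hy
  simpa [powSeries] using (ha.summable (abs_lt.2 hy)).tsum_eq_zero_add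

theorem hasSum_natCast_mul_pow {a : ℕ → ℝ} (ha : ConvergesOnUnitBall a) {w : ℝ} (hw : |w| < 1) :
    HasSum (fun k => k * a k * w ^ k) (w * powSeries (derivCoeff a) w) := by
  simpa using hasSum_pow_of_hasSum_succ (b := fun k => k * a k)
    ((ha.derivCoeff.hasSum hw).congr_fun fun k => by push_cast [derivCoeff]; ring)

section Recurrence

variable {a : ℕ → ℝ}

theorem abs_le_abs_zero_of_rec
    (hrec : ∀ k : ℕ, a (k + 1) * (2 * k + 3) ^ 2 = 4 * (k + 1) ^ 2 * a k) (k : ℕ) :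
    |a k| ≤ |a 0| := by
  induction k with
  | zero => rfl
  | succ k ih =>
    refine le_trans ?_ ih
    have h := congrArg abs (hrec k)
    rw [abs_mul, abs_mul, abs_of_pos (by positivity : (0 : ℝ) < (2 * k + 3) ^ 2),
      abs_of_nonneg (by positivity : (0 : ℝ) ≤ 4 * (k + 1) ^ 2)] at h
    refine le_of_mul_le_mul_right ?_ (by positivity : (0 : ℝ) < (2 * k + 3) ^ 2)
    rw [h]
    nlinarith [mul_nonneg (abs_nonneg (a k)) (by positivity : (0 : ℝ) ≤ 4 * k + 5)]

theorem convergesOnUnitBall_of_rec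
    (hrec : ∀ k : ℕ, a (k + 1) * (2 * k + 3) ^ 2 = 4 * (k + 1) ^ 2 * a k) :
    ConvergesOnUnitBall a :=
  .of_bounded (abs_le_abs_zero_of_rec hrec)

theorem powSeries_ode_of_rec
    (hrec : ∀ k : ℕ, a (k + 1) * (2 * k + 3) ^ 2 = 4 * (k + 1) ^ 2 * a k) {w : ℝ} (hw : |w| < 1) :
    (1 - 4 * w) * powSeries a w + 4 * w * (2 - 3 * w) * powSeries (derivCoeff a) w
      + 4 * w ^ 2 * (1 - w) * powSeries (derivCoeff (derivCoeff a)) w = a 0 := by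
  have ha := convergesOnUnitBall_of_rec hrec
  set F := powSeries a w
  set F₁ := powSeries (derivCoeff a) w
  set F₂ := powSeries (derivCoeff (derivCoeff a)) w
  have h₀ : HasSum (fun k => a k * w ^ k) F := ha.hasSum hw
  have h₁ : HasSum (fun k => k * a k * w ^ k) (w * F₁) := hasSum_natCast_mul_pow ha hw
  have h₂ : HasSum (fun k => k * (k - 1) * a k * w ^ k) (w ^ 2 * F₂) := by
    have := hasSum_pow_of_hasSum_succ (b := fun k => k * (k - 1) * a k) <|
      (hasSum_natCast_mul_pow ha.derivCoeff hw).congr_fun fun k => by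
        push_cast [derivCoeff]; ring
    simpa [sq, mul_assoc] using this
  -- `(2θ + 1)² F` and `(θ + 1)² F` for the Euler operator `θ = w d/dw`
  have hA : HasSum (fun k => (2 * k + 1) ^ 2 * a k * w ^ k)
      (4 * (w ^ 2 * F₂) + 8 * (w * F₁) + F) :=
    (((h₂.mul_left 4).add (h₁.mul_left 8)).add h₀).congr_fun fun k => by ring
  have hB : HasSum (fun k => (k + 1) ^ 2 * a k * w ^ k) (w ^ 2 * F₂ + 3 * (w * F₁) + F) :=
    ((h₂.add (h₁.mul_left 3)).add h₀).congr_fun fun k => by ring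
  have hA' := hasSum_pow_of_hasSum_succ (b := fun k => (2 * k + 1) ^ 2 * a k) <|
    (hB.mul_left 4).congr_fun fun k => by push_cast; linear_combination w ^ k * hrec k
  have := hA.unique hA'
  simp only [CharP.cast_eq_zero, mul_zero, zero_add, one_pow, one_mul] at this
  linear_combination this

end Recurrence

theorem HasDerivAt.comp_add_mul {f : ℝ → ℝ} {f' : ℝ} (a b x : ℝ)
    (hf : HasDerivAt f f' (a + b * x)) :
    HasDerivAt (fun y => f (a + b * y)) (b * f') x := by
  have hlin : HasDerivAt (fun y => a + b * y) b x := by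
    simpa using ((hasDerivAt_id' x).const_mul b).const_add a
  exact (hf.comp x hlin).congr_deriv (mul_comm f' b)

noncomputable def hyp3F2Coeff (k : ℕ) : ℝ := (k.factorial : ℝ) ^ 2 / poch (3 / 2) k ^ 2

theorem hyp3F2_eq_powSeries : hyp3F2 = powSeries hyp3F2Coeff := rfl

theorem hyp3F2Coeff_zero : hyp3F2Coeff 0 = 1 := by simp [hyp3F2Coeff, poch]

theorem hyp3F2Coeff_succ_mul (k : ℕ) :
    hyp3F2Coeff (k + 1) * (2 * k + 3) ^ 2 = 4 * (k + 1) ^ 2 * hyp3F2Coeff k := by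
  have hpos : 0 < poch (3 / 2) k := Finset.prod_pos fun i _ => by positivity
  simp only [hyp3F2Coeff, poch, Finset.prod_range_succ, Nat.factorial_succ] at hpos ⊢
  push_cast
  field_simp
  ring

theorem hasDerivAt_Dcatalan {x : ℝ} (hx : |1 + 16 * x| < 1) :
    HasDerivAt Dcatalan (-4 * (hyp3F2 (1 + 16 * x) +
      (1 + 16 * x) * powSeries (derivCoeff hyp3F2Coeff) (1 + 16 * x))) x := by
  have ha := convergesOnUnitBall_of_rec hyp3F2Coeff_succ_mul
  have hF := (hasDerivAt_powSeries ha hx).comp_add_mul 1 16 x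
  have hlin := ((hasDerivAt_id' x).const_mul 16).const_add 1 |>.div_const 4 |>.fun_neg
  refine (hlin.mul hF).congr_deriv ?_
  rw [hyp3F2_eq_powSeries]
  ring

theorem hasDerivAt_deriv_Dcatalan {x : ℝ} (hx : |1 + 16 * x| < 1) :
    HasDerivAt (deriv Dcatalan)
      (-64 * (2 * powSeries (derivCoeff hyp3F2Coeff) (1 + 16 * x) +
        (1 + 16 * x) * powSeries (derivCoeff (derivCoeff hyp3F2Coeff)) (1 + 16 * x))) x := by
  have ha := convergesOnUnitBall_of_rec hyp3F2Coeff_succ_mul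
  have hF := (hasDerivAt_powSeries ha hx).comp_add_mul 1 16 x
  have hF₁ := (hasDerivAt_powSeries ha.derivCoeff hx).comp_add_mul 1 16 x
  have hlin := ((hasDerivAt_id' x).const_mul 16).const_add 1
  have hopen : IsOpen {y : ℝ | |1 + 16 * y| < 1} := isOpen_lt (by fun_prop) continuous_const
  refine ((hF.add (hlin.mul hF₁)).const_mul (-4)).congr_of_eventuallyEq ?_ |>.congr_deriv ?_
  · filter_upwards [hopen.mem_nhds hx] with y hy
    exact (hasDerivAt_Dcatalan hy).deriv
  · ring

/-- **`D` solves the inhomogeneous equation `L·D = 1 + 16x`** on the interval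
`(−1/8, 0)`, where `L = x(1+16x)² d²/dx² + (1+16x)² d/dx − 4`. -/
theorem stmt_15 :
    ∀ x : ℝ, x ∈ Set.Ioo (-(1 : ℝ) / 8) 0 →
      x * (1 + 16 * x) ^ 2 * deriv (deriv Dcatalan) x +
          (1 + 16 * x) ^ 2 * deriv Dcatalan x - 4 * Dcatalan x = 1 + 16 * x := by
  intro x ⟨hx₁, hx₂⟩
  have hw : |1 + 16 * x| < 1 := abs_lt.2 ⟨by linarith, by linarith⟩
  have hode := powSeries_ode_of_rec hyp3F2Coeff_succ_mul hw
  rw [hyp3F2Coeff_zero] at hode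
  rw [(hasDerivAt_deriv_Dcatalan hw).deriv, (hasDerivAt_Dcatalan hw).deriv, Dcatalan,
    hyp3F2_eq_powSeries]
  linear_combination (1 + 16 * x) * hode
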